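/- For α = 1 and β ≥ 1, the beta-binomial pmf P(j) = C(m,j) * B(j+1, m-j+β)/B(1,β) is monotonically non-increasing in j on {0,...,m}. -/
import Mathlib


open Finset Real

/-- The Beta function `B(x,y) = Γ(x)Γ(y)/Γ(x+y)`. -/
noncomputable def betaFn (x y : ℝ) : ℝ := Gamma x * Gamma y / Gamma (x + y)

theorem betaBinomial_pmf_antitone (m : ℕ) (hm : 1 ≤ m) (β : ℝ) (hβ : 1 ≤ β) :
    ∀ j : ℕ, j < m →
      (m.choose (j + 1) : ℝ) * betaFn ((j : ℝ) + 1 + 1) ((m : ℝ) - ((j : ℝ) + 1) + β) / betaFn 1 β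
      ≤ (m.choose j : ℝ) * betaFn ((j : ℝ) + 1) ((m : ℝ) - (j : ℝ) + β) / betaFn 1 β := by
  intro j hj
  have hjm : (j : ℝ) + 1 ≤ (m : ℝ) := by exact_mod_cast hj
  have hβ0 : (0:ℝ) < β := by linarith
  set x : ℝ := (j : ℝ) + 1 with hxdef
  set y : ℝ := (m : ℝ) - ((j : ℝ) + 1) + β with hydef
  have hx0 : 0 < x := by positivity
  have hy0 : 0 < y := by rw [hydef]; linarith
  have hden : 0 < betaFn 1 β := by
    unfold betaFn
    rw [Real.Gamma_one]
    have h1 : 0 < Real.Gamma β := Real.Gamma_pos_of_pos hβ0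
    have h2 : 0 < Real.Gamma (1 + β) := Real.Gamma_pos_of_pos (by linarith)
    positivity
  apply div_le_div_of_nonneg_right ?_ hden.le
  -- rewrite both beta values
  have hmy : (m : ℝ) - (j : ℝ) + β = y + 1 := by rw [hydef]; ring
  have hsum : x + 1 + y = x + y + 1 := by ring
  have hsum2 : x + (y + 1) = x + y + 1 := by ring
  have hΓx : Real.Gamma (x + 1) = x * Real.Gamma x := Real.Gamma_add_one hx0.ne'
  have hΓy : Real.Gamma (y + 1) = y * Real.Gamma y := Real.Gamma_add_one hy0.ne'
  have hΓxy : 0 < Real.Gamma (x + y + 1) := Real.Gamma_pos_of_pos (by linarith)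
  have hΓxp : 0 < Real.Gamma x := Real.Gamma_pos_of_pos hx0
  have hΓyp : 0 < Real.Gamma y := Real.Gamma_pos_of_pos hy0
  rw [hmy]
  show (m.choose (j + 1) : ℝ) * betaFn (x + 1) y ≤ (m.choose j : ℝ) * betaFn x (y + 1)
  unfold betaFn
  rw [hsum, hsum2, hΓx, hΓy]
  have key : (m.choose (j + 1) : ℝ) * x ≤ (m.choose j : ℝ) * y := by
    have h := Nat.choose_succ_right_eq m j
    have hc : (m.choose (j + 1) : ℝ) * x = (m.choose j : ℝ) * ((m : ℝ) - (j : ℝ)) := by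
      have hcast : ((m.choose (j + 1) * (j + 1) : ℕ) : ℝ) = ((m.choose j * (m - j) : ℕ) : ℝ) := by
        exact_mod_cast congrArg (Nat.cast : ℕ → ℝ) h
      push_cast [Nat.cast_sub hj.le] at hcast
      rw [hxdef]; linarith
    rw [hc, hydef]
    have : (m : ℝ) - (j : ℝ) ≤ (m : ℝ) - ((j : ℝ) + 1) + β := by linarith
    nlinarith [(Nat.cast_nonneg (m.choose j) : (0:ℝ) ≤ (m.choose j : ℝ))]
  calc (m.choose (j + 1) : ℝ) * (x * Real.Gamma x * Real.Gamma y / Real.Gamma (x + y + 1))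
      = ((m.choose (j + 1) : ℝ) * x) * (Real.Gamma x * Real.Gamma y / Real.Gamma (x + y + 1)) := by
        ring
    _ ≤ ((m.choose j : ℝ) * y) * (Real.Gamma x * Real.Gamma y / Real.Gamma (x + y + 1)) := by
        apply mul_le_mul_of_nonneg_right key; positivity
    _ = (m.choose j : ℝ) * (Real.Gamma x * (y * Real.Gamma y) / Real.Gamma (x + y + 1)) := by
        ring
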